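/- arXiv:2604.00585 — 3 statements merged into one kernel-verified Lean document; each statement's English description precedes it below -/
import Mathlib

section
/- Let f: U → ℝ be a convex function on an open convex set U ⊆ ℝ^d. If at some point x ∈ U all partial derivatives ∂_i f(x) exist, then f is (totally/Fréchet) differentiable at x. -/
/-!
Let `L` be the linear form with the given partial derivatives and `r(v) = f(x + v) - f x - L v`,
a convex function of `v` vanishing at `0`. Writing `v = ∑ vᵢ eᵢ` as the average of the points
`d vᵢ eᵢ`, Jensen bounds `r(v)` above by the average of the one-dimensional remainders
`r(d vᵢ eᵢ) = o(v)`. Convexity at the midpoint `0` of `v` and `-v` gives `r(v) ≥ -r(-v)`, so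
the same bound applied to `-v` controls `r(v)` from below.
-/

open Asymptotics Filter Topology

lemma Asymptotics.isLittleO_of_neg_le_of_le {α E : Type*} [NormedAddCommGroup E] {l : Filter α}
    {r g h : α → ℝ} {k : α → E} (hg : g =o[l] k) (hh : h =o[l] k)
    (hle : ∀ᶠ a in l, r a ≤ g a) (hge : ∀ᶠ a in l, -h a ≤ r a) : r =o[l] k := by
  refine IsBigO.trans_isLittleO (g := fun a => ‖g a‖ + ‖h a‖) ?_ (hg.norm_left.add hh.norm_left)
  refine IsBigO.of_bound' ?_
  filter_upwards [hle, hge] with a h₁ h₂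
  show |r a| ≤ ‖‖g a‖ + ‖h a‖‖
  rw [Real.norm_of_nonneg (by positivity), Real.norm_eq_abs, Real.norm_eq_abs]
  exact abs_le.2 ⟨by linarith [le_abs_self (h a), abs_nonneg (g a)],
    by linarith [le_abs_self (g a), abs_nonneg (h a)]⟩

lemma Asymptotics.IsLittleO.comp_continuousLinearMap {E F G : Type*} [NormedAddCommGroup E]
    [NormedSpace ℝ E] [NormedAddCommGroup F] [NormedSpace ℝ F] [NormedAddCommGroup G]
    {g : F → G} (hg : g =o[𝓝 0] fun t => t) (ℓ : E →L[ℝ] F) :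
    (fun v => g (ℓ v)) =o[𝓝 0] fun v => v :=
  (hg.comp_tendsto (ℓ.continuous.tendsto' 0 0 (map_zero ℓ))).trans_isBigO (ℓ.isBigO_id _)

namespace ConvexOn

section Algebraic

variable {E : Type*} [AddCommGroup E] [Module ℝ E] {s : Set E} {f : E → ℝ} {x v : E}

lemma two_mul_le_add_sub (hf : ConvexOn ℝ s f) (h₁ : x + v ∈ s) (h₂ : x - v ∈ s) :
    2 * f x ≤ f (x + v) + f (x - v) := by
  have := hf.2 h₁ h₂ (by norm_num : (0 : ℝ) ≤ 1 / 2) (by norm_num : (0 : ℝ) ≤ 1 / 2) (by norm_num)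
  rw [← smul_add, add_add_sub_cancel, ← two_smul ℝ x, smul_smul] at this
  norm_num at this
  linarith

lemma map_add_sum_le_sum_div_card {ι : Type*} [Fintype ι] [Nonempty ι] (hf : ConvexOn ℝ s f)
    {u : ι → E} (hu : ∀ i, x + (Fintype.card ι : ℝ) • u i ∈ s) :
    f (x + ∑ i, u i) ≤ (∑ i, f (x + (Fintype.card ι : ℝ) • u i)) / Fintype.card ι := by
  have hn : (Fintype.card ι : ℝ) ≠ 0 := Nat.cast_ne_zero.2 Fintype.card_ne_zero
  have hw : ∑ _i : ι, (Fintype.card ι : ℝ)⁻¹ = 1 := by simp [hn]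
  have hcomb : ∑ i, (Fintype.card ι : ℝ)⁻¹ • (x + (Fintype.card ι : ℝ) • u i) =
      x + ∑ i, u i := by
    simp only [smul_add, Finset.sum_add_distrib, ← Finset.sum_smul, hw, one_smul, smul_smul,
      inv_mul_cancel₀ hn]
  have := hf.map_sum_le (t := Finset.univ) (fun _ _ => by positivity) hw (fun i _ => hu i)
  rw [hcomb] at this
  simpa [Finset.mul_sum, div_eq_inv_mul, smul_eq_mul] using this

end Algebraic

variable {E : Type*} [NormedAddCommGroup E] [NormedSpace ℝ E] {ι : Type*} [Fintype ι]
  {s : Set E} {f : E → ℝ} {x : E}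

lemma sub_sub_constrL_le [Nonempty ι] (hf : ConvexOn ℝ s f) (b : Module.Basis ι ℝ E)
    (p : ι → ℝ) {v : E} (hv : ∀ i, x + ((Fintype.card ι : ℝ) * b.repr v i) • b i ∈ s) :
    f (x + v) - f x - b.constrL p v ≤ (Fintype.card ι : ℝ)⁻¹ * ∑ i,
      (f (x + ((Fintype.card ι : ℝ) * b.repr v i) • b i) - f x -
        (Fintype.card ι : ℝ) * b.repr v i * p i) := by
  have hn : (Fintype.card ι : ℝ) ≠ 0 := Nat.cast_ne_zero.2 Fintype.card_ne_zero
  have hjensen := hf.map_add_sum_le_sum_div_card (u := fun i => b.repr v i • b i)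
    (by simpa only [smul_smul] using hv)
  simp only [b.sum_repr, smul_smul, div_eq_inv_mul, Finset.mul_sum] at hjensen
  simp only [Module.Basis.constrL_apply, Module.Basis.equivFun_apply, smul_eq_mul,
    Finset.sum_sub_distrib, Finset.sum_const, Finset.card_univ, nsmul_eq_mul, mul_sub,
    Finset.mul_sum, mul_assoc, inv_mul_cancel_left₀ hn]
  linarith

theorem hasFDerivAt_of_hasDerivAt_basis (hf : ConvexOn ℝ s f) (hs : s ∈ 𝓝 x)
    (b : Module.Basis ι ℝ E) {p : ι → ℝ}
    (hp : ∀ i, HasDerivAt (fun t : ℝ => f (x + t • b i)) (p i) 0) :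
    HasFDerivAt f (b.constrL p) x := by
  rcases subsingleton_or_nontrivial E with hE | hE
  · rw [Subsingleton.elim (b.constrL p) 0]
    exact hasFDerivAt_of_subsingleton f x
  have := b.index_nonempty
  set n : ℝ := (Fintype.card ι : ℝ)
  set ℓ : ι → E →L[ℝ] ℝ := fun i =>
    (ContinuousLinearMap.proj i).comp (b.equivFunL : E →L[ℝ] ι → ℝ)
  set g : ι → ℝ → ℝ := fun i t => f (x + t • b i) - f x - t * p i
  have hg : ∀ i, g i =o[𝓝 0] fun t => t := fun i => by
    simpa [g, mul_comm] using hasDerivAt_iff_isLittleO_nhds_zero.1 (hp i)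
  set R : E → ℝ := fun v => n⁻¹ * ∑ i, g i (n * b.repr v i)
  have hR : R =o[𝓝 0] fun v => v :=
    (IsLittleO.fun_sum fun i _ => (hg i).comp_continuousLinearMap (n • ℓ i)).const_mul_left n⁻¹
  have hnear : ∀ᶠ v in 𝓝 (0 : E), x + v ∈ s ∧ ∀ i, x + (n * b.repr v i) • b i ∈ s := by
    have hmem : ∀ w : E → E, Continuous w → w 0 = x → ∀ᶠ v in 𝓝 0, w v ∈ s :=
      fun w hw hw0 => (hw.tendsto' 0 x hw0).eventually_mem hs
    refine (hmem _ (by fun_prop) (by simp)).and (eventually_all.2 fun i => hmem _ ?_ (by simp))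
    have : Continuous fun v => b.repr v i := (ℓ i).continuous
    fun_prop
  have hupper : ∀ v, (∀ i, x + (n * b.repr v i) • b i ∈ s) →
      f (x + v) - f x - b.constrL p v ≤ R v := fun v hv => hf.sub_sub_constrL_le b p hv
  have hneg : Tendsto (fun v : E => -v) (𝓝 0) (𝓝 0) := by simpa using tendsto_neg (0 : E)
  have hR' : (fun v => R (-v)) =o[𝓝 0] fun v => v := (hR.comp_tendsto hneg).of_neg_right
  rw [hasFDerivAt_iff_isLittleO_nhds_zero]
  refine isLittleO_of_neg_le_of_le hR hR' ?_ ?_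
  · filter_upwards [hnear] with v hv using hupper v hv.2
  · filter_upwards [hnear, hneg.eventually hnear] with v hv hv'
    have hmid := hf.two_mul_le_add_sub hv.1 (sub_eq_add_neg x v ▸ hv'.1)
    have hup := hupper (-v) hv'.2
    simp only [map_neg, ← sub_eq_add_neg] at hup
    linarith

end ConvexOn

theorem convex_differentiableAt_of_partials_general {d : ℕ}
    (U : Set (EuclideanSpace ℝ (Fin d))) (hU : IsOpen U)
    (f : EuclideanSpace ℝ (Fin d) → ℝ) (hf : ConvexOn ℝ U f)
    (x : EuclideanSpace ℝ (Fin d)) (hx : x ∈ U)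
    (hpartial : ∀ i : Fin d, ∃ p : ℝ,
      HasDerivAt (fun t : ℝ => f (x + t • EuclideanSpace.single i (1:ℝ))) p 0) :
    DifferentiableAt ℝ f x := by
  choose p hp using hpartial
  refine (hf.hasFDerivAt_of_hasDerivAt_basis (hU.mem_nhds hx)
    (EuclideanSpace.basisFun (Fin d) ℝ).toBasis (p := p) fun i => ?_).differentiableAt
  simpa using hp i

/-- A convex function on an open convex set in ℝ^d that has all partial
derivatives at a point is (Fréchet) differentiable at that point. -/
theorem convex_differentiableAt_of_partials {d : ℕ}
    (U : Set (EuclideanSpace ℝ (Fin d))) (hU : IsOpen U) (hUconv : Convex ℝ U)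
    (f : EuclideanSpace ℝ (Fin d) → ℝ) (hf : ConvexOn ℝ U f)
    (x : EuclideanSpace ℝ (Fin d)) (hx : x ∈ U)
    (hpartial : ∀ i : Fin d, ∃ p : ℝ,
      HasDerivAt (fun t : ℝ => f (x + t • EuclideanSpace.single i (1:ℝ))) p 0) :
    DifferentiableAt ℝ f x :=
  convex_differentiableAt_of_partials_general U hU f hf x hx hpartial
end

section
/- Let A: [0,1] → ℝ be convex with max(t, 1−t) ≤ A(t) ≤ 1 for all t ∈ [0,1], twice continuously differentiable on (0,1), and suppose A_∞ := sup_{t ∈ (0,1)} t(1−t)A''(t) < ∞. Define L(x₁,x₂) = (x₁+x₂)·A(x₂/(x₁+x₂)) for (x₁,x₂) with x₁+x₂ > 0. Then for all (x₁,x₂) ∈ (0,∞)², the second partial derivatives of L satisfy |∂_{11}L(x₁,x₂)| ≤ A_∞/x₁, |∂_{22}L(x₁,x₂)| ≤ A_∞/x₂, and |∂_{12}L(x₁,x₂)| ≤ A_∞/max(x₁,x₂). -/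
/-!
`L` is positively homogeneous of degree one, so its first partials depend only on
`τ = x₂ / (x₁ + x₂)`: they are the values at `0` and at `1` of the tangent line to `A` at `τ`.
Differentiating once more, `∂ᵢ∂ⱼL = (eᵢ - τ) (eⱼ - τ) A''(τ) / (x₁ + x₂)` with `e₁ = 0`, `e₂ = 1`.
Since `(1 - τ) (x₁ + x₂) = x₁` and `τ (x₁ + x₂) = x₂`, the second partials are
`τ (1 - τ) A''(τ)` times `τ / x₁`, `(1 - τ) / x₂` and `-1 / (x₁ + x₂)`, and `A'' ≥ 0` by convexity.
-/

open Set Filter Topology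

noncomputable section

def tangentLine (A : ℝ → ℝ) (t s : ℝ) : ℝ := A t + (s - t) * deriv A t

def pickandsCurvature (A : ℝ → ℝ) (t : ℝ) : ℝ := t * (1 - t) * deriv (deriv A) t

end

lemma ConvexOn.deriv_deriv_nonneg {f : ℝ → ℝ} {s : Set ℝ} {x : ℝ} (hf : ConvexOn ℝ s f)
    (hs : IsOpen s) (hd : ∀ y ∈ s, DifferentiableAt ℝ f y) (hx : x ∈ s) :
    0 ≤ deriv (deriv f) x := by
  rw [← derivWithin_of_isOpen hs hx]
  exact (hf.monotoneOn_deriv hd).derivWithin_nonneg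

lemma ContDiffOn.hasDerivAt_deriv_and_deriv_deriv {f : ℝ → ℝ} {s : Set ℝ} {x : ℝ}
    (hf : ContDiffOn ℝ 2 f s) (hs : IsOpen s) (hx : x ∈ s) :
    HasDerivAt f (deriv f x) x ∧ HasDerivAt (deriv f) (deriv (deriv f) x) x := by
  have hf' : ContDiffOn ℝ 1 (deriv f) s := hf.deriv_of_isOpen hs (by norm_num)
  exact ⟨((hf.differentiableOn (by norm_num)).differentiableAt (hs.mem_nhds hx)).hasDerivAt,
    ((hf'.differentiableOn one_ne_zero).differentiableAt (hs.mem_nhds hx)).hasDerivAt⟩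

lemma div_add_mem_Ioo {a b : ℝ} (ha : 0 < a) (hb : 0 < b) : b / (a + b) ∈ Ioo (0 : ℝ) 1 :=
  ⟨by positivity, (div_lt_one (by positivity)).2 (by linarith)⟩

lemma abs_div_le_div_of_le {q M x y : ℝ} (hq : 0 ≤ q) (hqM : q ≤ M) (hy : 0 < y) (hyx : y ≤ x) :
    |q / x| ≤ M / y := by
  rw [abs_of_nonneg (div_nonneg hq (hy.le.trans hyx))]
  exact div_le_div₀ (hq.trans hqM) hqM hy hyx

section Derivatives

variable {A ρ σ : ℝ → ℝ} {a ρ' v : ℝ}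

lemma HasDerivAt.div_of_deriv_denom_eq_one (hρ : HasDerivAt ρ ρ' v) (hσ : HasDerivAt σ 1 v)
    (hσ0 : σ v ≠ 0) : HasDerivAt (fun w => ρ w / σ w) ((ρ' - ρ v / σ v) / σ v) v := by
  refine (hρ.fun_div hσ hσ0).congr_deriv ?_
  field_simp

lemma hasDerivAt_mul_comp_div (hρ : HasDerivAt ρ ρ' v) (hσ : HasDerivAt σ 1 v) (hσ0 : σ v ≠ 0)
    (hA : HasDerivAt A (deriv A (ρ v / σ v)) (ρ v / σ v)) :
    HasDerivAt (fun w => σ w * A (ρ w / σ w)) (tangentLine A (ρ v / σ v) ρ') v := by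
  refine (hσ.mul (hA.comp v (hρ.div_of_deriv_denom_eq_one hσ hσ0))).congr_deriv ?_
  simp only [tangentLine, Function.comp_apply]
  field_simp

lemma hasDerivAt_tangentLine {t : ℝ} (hA : HasDerivAt A (deriv A t) t)
    (hA' : HasDerivAt (deriv A) a t) (s : ℝ) :
    HasDerivAt (fun t => tangentLine A t s) ((s - t) * a) t := by
  refine (hA.add (((hasDerivAt_id t).const_sub s).mul hA')).congr_deriv ?_
  simp only [id]
  ring

lemma hasDerivAt_tangentLine_comp_div (hρ : HasDerivAt ρ ρ' v) (hσ : HasDerivAt σ 1 v)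
    (hσ0 : σ v ≠ 0) (hA : HasDerivAt A (deriv A (ρ v / σ v)) (ρ v / σ v))
    (hA' : HasDerivAt (deriv A) a (ρ v / σ v)) (s : ℝ) :
    HasDerivAt (fun w => tangentLine A (ρ w / σ w) s)
      ((s - ρ v / σ v) * a * ((ρ' - ρ v / σ v) / σ v)) v :=
  (hasDerivAt_tangentLine hA hA' s).comp (h₂ := fun t => tangentLine A t s) v
    (hρ.div_of_deriv_denom_eq_one hσ hσ0)

end Derivatives

section HomogeneousExtension

variable {A : ℝ → ℝ} {L : ℝ → ℝ → ℝ}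

lemma hasDerivAt_fst_of_eq_homogeneous
    (hL : ∀ x1 x2 : ℝ, 0 < x1 + x2 → L x1 x2 = (x1 + x2) * A (x2 / (x1 + x2))) {a b : ℝ}
    (hab : 0 < a + b) (hA : HasDerivAt A (deriv A (b / (a + b))) (b / (a + b))) :
    HasDerivAt (fun v => L v b) (tangentLine A (b / (a + b)) 0) a := by
  have hloc : (fun v => L v b) =ᶠ[𝓝 a] fun v => (v + b) * A (b / (v + b)) := by
    filter_upwards [eventually_gt_nhds (show -b < a by linarith)] with v hv
    exact hL v b (by linarith)
  exact (hasDerivAt_mul_comp_div (hasDerivAt_const a b) ((hasDerivAt_id' a).add_const b)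
    hab.ne' hA).congr_of_eventuallyEq hloc

lemma hasDerivAt_snd_of_eq_homogeneous
    (hL : ∀ x1 x2 : ℝ, 0 < x1 + x2 → L x1 x2 = (x1 + x2) * A (x2 / (x1 + x2))) {a b : ℝ}
    (hab : 0 < a + b) (hA : HasDerivAt A (deriv A (b / (a + b))) (b / (a + b))) :
    HasDerivAt (fun v => L a v) (tangentLine A (b / (a + b)) 1) b := by
  have hloc : (fun v => L a v) =ᶠ[𝓝 b] fun v => (a + v) * A (v / (a + v)) := by
    filter_upwards [eventually_gt_nhds (show -a < b by linarith)] with v hv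
    exact hL a v (by linarith)
  exact (hasDerivAt_mul_comp_div (hasDerivAt_id' b) ((hasDerivAt_id' b).const_add a)
    hab.ne' hA).congr_of_eventuallyEq hloc

lemma deriv_deriv_fst_eq
    (hL : ∀ x1 x2 : ℝ, 0 < x1 + x2 → L x1 x2 = (x1 + x2) * A (x2 / (x1 + x2)))
    (hA : ∀ t ∈ Ioo (0 : ℝ) 1, HasDerivAt A (deriv A t) t)
    (hA' : ∀ t ∈ Ioo (0 : ℝ) 1, HasDerivAt (deriv A) (deriv (deriv A) t) t)
    {x1 x2 : ℝ} (h1 : 0 < x1) (h2 : 0 < x2) :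
    deriv (fun u => deriv (fun v => L v x2) u) x1 =
      pickandsCurvature A (x2 / (x1 + x2)) * (x2 / (x1 + x2)) / x1 := by
  have hτ := div_add_mem_Ioo h1 h2
  have hloc : (fun u => deriv (fun v => L v x2) u) =ᶠ[𝓝 x1]
      fun u => tangentLine A (x2 / (u + x2)) 0 := by
    filter_upwards [eventually_gt_nhds h1] with u hu
    exact (hasDerivAt_fst_of_eq_homogeneous hL (by linarith) (hA _ (div_add_mem_Ioo hu h2))).deriv
  rw [hloc.deriv_eq, (hasDerivAt_tangentLine_comp_div (hasDerivAt_const x1 x2)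
    ((hasDerivAt_id' x1).add_const x2) (by positivity) (hA _ hτ) (hA' _ hτ) 0).deriv]
  unfold pickandsCurvature
  field_simp
  ring

lemma deriv_deriv_snd_eq
    (hL : ∀ x1 x2 : ℝ, 0 < x1 + x2 → L x1 x2 = (x1 + x2) * A (x2 / (x1 + x2)))
    (hA : ∀ t ∈ Ioo (0 : ℝ) 1, HasDerivAt A (deriv A t) t)
    (hA' : ∀ t ∈ Ioo (0 : ℝ) 1, HasDerivAt (deriv A) (deriv (deriv A) t) t)
    {x1 x2 : ℝ} (h1 : 0 < x1) (h2 : 0 < x2) :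
    deriv (fun u => deriv (fun v => L x1 v) u) x2 =
      pickandsCurvature A (x2 / (x1 + x2)) * (1 - x2 / (x1 + x2)) / x2 := by
  have hτ := div_add_mem_Ioo h1 h2
  have hloc : (fun u => deriv (fun v => L x1 v) u) =ᶠ[𝓝 x2]
      fun u => tangentLine A (u / (x1 + u)) 1 := by
    filter_upwards [eventually_gt_nhds h2] with u hu
    exact (hasDerivAt_snd_of_eq_homogeneous hL (by linarith) (hA _ (div_add_mem_Ioo h1 hu))).deriv
  rw [hloc.deriv_eq, (hasDerivAt_tangentLine_comp_div (hasDerivAt_id' x2)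
    ((hasDerivAt_id' x2).const_add x1) (by positivity) (hA _ hτ) (hA' _ hτ) 1).deriv]
  unfold pickandsCurvature
  field_simp

lemma deriv_deriv_fst_snd_eq
    (hL : ∀ x1 x2 : ℝ, 0 < x1 + x2 → L x1 x2 = (x1 + x2) * A (x2 / (x1 + x2)))
    (hA : ∀ t ∈ Ioo (0 : ℝ) 1, HasDerivAt A (deriv A t) t)
    (hA' : ∀ t ∈ Ioo (0 : ℝ) 1, HasDerivAt (deriv A) (deriv (deriv A) t) t)
    {x1 x2 : ℝ} (h1 : 0 < x1) (h2 : 0 < x2) :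
    deriv (fun u => deriv (fun v => L u v) x2) x1 =
      -(pickandsCurvature A (x2 / (x1 + x2)) / (x1 + x2)) := by
  have hτ := div_add_mem_Ioo h1 h2
  have hloc : (fun u => deriv (fun v => L u v) x2) =ᶠ[𝓝 x1]
      fun u => tangentLine A (x2 / (u + x2)) 1 := by
    filter_upwards [eventually_gt_nhds h1] with u hu
    exact (hasDerivAt_snd_of_eq_homogeneous hL (by linarith) (hA _ (div_add_mem_Ioo hu h2))).deriv
  rw [hloc.deriv_eq, (hasDerivAt_tangentLine_comp_div (hasDerivAt_const x1 x2)
    ((hasDerivAt_id' x1).add_const x2) (by positivity) (hA _ hτ) (hA' _ hτ) 1).deriv]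
  unfold pickandsCurvature
  field_simp
  ring

end HomogeneousExtension

theorem pickands_second_partial_bounds_general (A : ℝ → ℝ) (L : ℝ → ℝ → ℝ) (Ainf : ℝ)
    (hA1 : ConvexOn ℝ (Set.Icc 0 1) A)
    (hA3 : ContDiffOn ℝ 2 A (Set.Ioo 0 1))
    (hAinf : ∀ t ∈ Set.Ioo (0:ℝ) 1, t * (1 - t) * deriv (deriv A) t ≤ Ainf)
    (hL : ∀ x1 x2 : ℝ, 0 < x1 + x2 → L x1 x2 = (x1 + x2) * A (x2 / (x1 + x2)))
    (x1 x2 : ℝ) (h1 : 0 < x1) (h2 : 0 < x2) :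
    |deriv (fun u => deriv (fun v => L v x2) u) x1| ≤ Ainf / x1 ∧
    |deriv (fun u => deriv (fun v => L x1 v) u) x2| ≤ Ainf / x2 ∧
    |deriv (fun u => deriv (fun v => L u v) x2) x1| ≤ Ainf / max x1 x2 := by
  have hA : ∀ t ∈ Ioo (0 : ℝ) 1, HasDerivAt A (deriv A t) t := fun t ht =>
    (hA3.hasDerivAt_deriv_and_deriv_deriv isOpen_Ioo ht).1
  have hA' : ∀ t ∈ Ioo (0 : ℝ) 1, HasDerivAt (deriv A) (deriv (deriv A) t) t := fun t ht =>
    (hA3.hasDerivAt_deriv_and_deriv_deriv isOpen_Ioo ht).2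
  set τ := x2 / (x1 + x2)
  have hτ : τ ∈ Ioo (0 : ℝ) 1 := div_add_mem_Ioo h1 h2
  have hκ0 : 0 ≤ pickandsCurvature A τ :=
    mul_nonneg (mul_nonneg hτ.1.le (sub_nonneg.2 hτ.2.le))
      ((hA1.subset Ioo_subset_Icc_self (convex_Ioo 0 1)).deriv_deriv_nonneg isOpen_Ioo
        (fun t ht => (hA t ht).differentiableAt) hτ)
  have hκ : pickandsCurvature A τ ≤ Ainf := hAinf τ hτ
  rw [deriv_deriv_fst_eq hL hA hA' h1 h2, deriv_deriv_snd_eq hL hA hA' h1 h2,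
    deriv_deriv_fst_snd_eq hL hA hA' h1 h2, abs_neg]
  refine ⟨abs_div_le_div_of_le (mul_nonneg hκ0 hτ.1.le)
      ((mul_le_of_le_one_right hκ0 hτ.2.le).trans hκ) h1 le_rfl,
    abs_div_le_div_of_le (mul_nonneg hκ0 (sub_nonneg.2 hτ.2.le))
      ((mul_le_of_le_one_right hκ0 (by linarith [hτ.1])).trans hκ) h2 le_rfl,
    abs_div_le_div_of_le hκ0 hκ (lt_max_of_lt_left h1) (max_le (by linarith) (by linarith))⟩

/-- Bounds on the second partial derivatives of the bivariate stable tail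
dependence function induced by a Pickands dependence function A with
A_∞ = sup t(1−t)A''(t) < ∞. -/
theorem pickands_second_partial_bounds (A : ℝ → ℝ) (L : ℝ → ℝ → ℝ) (Ainf : ℝ)
    (hA1 : ConvexOn ℝ (Set.Icc 0 1) A)
    (hA2 : ∀ t ∈ Set.Icc (0:ℝ) 1, max t (1 - t) ≤ A t ∧ A t ≤ 1)
    (hA3 : ContDiffOn ℝ 2 A (Set.Ioo 0 1))
    (hAinf : ∀ t ∈ Set.Ioo (0:ℝ) 1, t * (1 - t) * deriv (deriv A) t ≤ Ainf)
    (hL : ∀ x1 x2 : ℝ, 0 < x1 + x2 → L x1 x2 = (x1 + x2) * A (x2 / (x1 + x2)))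
    (x1 x2 : ℝ) (h1 : 0 < x1) (h2 : 0 < x2) :
    |deriv (fun u => deriv (fun v => L v x2) u) x1| ≤ Ainf / x1 ∧
    |deriv (fun u => deriv (fun v => L x1 v) u) x2| ≤ Ainf / x2 ∧
    |deriv (fun u => deriv (fun v => L u v) x2) x1| ≤ Ainf / max x1 x2 :=
  pickands_second_partial_bounds_general A L Ainf hA1 hA3 hAinf hL x1 x2 h1 h2
end

section
/- Let μ be a measure on [0,∞]^d \ {0} that is homogeneous of degree −1, i.e. μ(sA) = s^{-1}μ(A) for all s > 0 and Borel sets A bounded away from the origin. Then μ assigns zero mass to every hyperplane of the form {y : y_j = c} for any fixed j and c > 0. -/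
/-!
Scaling by `s = t / c` maps the hyperplane `{y_j = c}` onto `{y_j = t}`, so by homogeneity
all the parallel hyperplanes `{y_j = t}`, `t > 0`, have positive mass as soon as one of them
has. For `t ≥ c` they are uncountably many pairwise disjoint sets inside `{c ≤ y_j}`, which has
finite mass; but a finite measure charges at most countably many disjoint sets.
-/

open MeasureTheory Pointwise

lemma smul_setOf_apply_eq {ι 𝕜 : Type*} [DivisionRing 𝕜] {s : 𝕜} (hs : s ≠ 0) (j : ι) (c : 𝕜) :
    s • {y : ι → 𝕜 | y j = c} = {y | y j = s * c} := by
  rw [← Set.preimage_smul_inv₀ hs]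
  ext y
  simp only [Set.mem_preimage, Set.mem_ofPred_eq, Pi.smul_apply, smul_eq_mul]
  constructor
  · intro h
    rw [← h, mul_inv_cancel_left₀ hs]
  · intro h
    rw [h, inv_mul_cancel_left₀ hs]

lemma le_norm_of_le_apply {ι : Type*} [Fintype ι] {x : ι → ℝ} {j : ι} {c : ℝ} (h : c ≤ x j) :
    c ≤ ‖x‖ :=
  h.trans ((le_abs_self _).trans (norm_le_pi_norm x j))

lemma measure_setOf_apply_eq_pos {ι : Type*} [Fintype ι] {μ : Measure (ι → ℝ)}
    (hhom : ∀ s : ℝ, 0 < s → ∀ A : Set (ι → ℝ), MeasurableSet A →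
      (∃ ε > 0, ∀ x ∈ A, ε ≤ ‖x‖) → μ (s • A) = ENNReal.ofReal s⁻¹ * μ A)
    {j : ι} {c t : ℝ} (hc : 0 < c) (ht : 0 < t) (hpos : 0 < μ {y | y j = c}) :
    0 < μ {y : ι → ℝ | y j = t} := by
  have hs : 0 < t / c := div_pos ht hc
  have hscale : {y : ι → ℝ | y j = t} = (t / c) • {y | y j = c} := by
    rw [smul_setOf_apply_eq hs.ne', div_mul_cancel₀ t hc.ne']
  rw [hscale, hhom (t / c) hs _ (measurableSet_eq_fun (measurable_pi_apply j) measurable_const)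
    ⟨c, hc, fun x hx => le_norm_of_le_apply hx.ge⟩]
  exact ENNReal.mul_pos (ENNReal.ofReal_pos.2 (inv_pos.2 hs)).ne' hpos.ne'

/-- A measure that is homogeneous of degree −1 and finite on sets bounded away
from the origin assigns no mass to hyperplanes {y : y_j = c} with c > 0. -/
theorem homogeneous_measure_null_hyperplane {d : ℕ} (μ : Measure (Fin d → ℝ))
    (hfin : ∀ A : Set (Fin d → ℝ), (∃ ε > 0, ∀ x ∈ A, ε ≤ ‖x‖) → μ A < ⊤)
    (hhom : ∀ s : ℝ, 0 < s → ∀ A : Set (Fin d → ℝ), MeasurableSet A →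
      (∃ ε > 0, ∀ x ∈ A, ε ≤ ‖x‖) → μ (s • A) = ENNReal.ofReal s⁻¹ * μ A)
    (j : Fin d) (c : ℝ) (hc : 0 < c) :
    μ {y : Fin d → ℝ | y j = c} = 0 := by
  by_contra hne
  set B : Set (Fin d → ℝ) := {y | c ≤ y j}
  have : IsFiniteMeasure (μ.restrict B) :=
    isFiniteMeasure_restrict.2 (hfin B ⟨c, hc, fun x hx => le_norm_of_le_apply hx⟩).ne
  have hcount : {t : ℝ | 0 < μ.restrict B {y | y j = t}}.Countable :=
    Measure.countable_meas_level_set_pos (measurable_pi_apply j)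
  have hIcc : Set.Icc c (c + 1) ⊆ {t : ℝ | 0 < μ.restrict B {y | y j = t}} := by
    intro t ht
    have hlevel : {y : Fin d → ℝ | y j = t} ⊆ B := fun y hy => ht.1.trans_eq hy.symm
    rw [Set.mem_ofPred, Measure.restrict_eq_self μ hlevel]
    exact measure_setOf_apply_eq_pos hhom hc (hc.trans_le ht.1) (pos_iff_ne_zero.2 hne)
  linarith [Cardinal.Real.Icc_countable_iff.1 (hcount.mono hIcc)]
end
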